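/- arXiv:2405.19156 — 4 statements merged into one kernel-verified Lean document; each statement's English description precedes it below -/
import Mathlib

section
/- Let Proj_{D,K} be the family of all linear maps R^D → R^K given by matrices with entries in [-1,1], with the Euclidean metric on R^K. Then the distance dimension of Proj_{D,K}, i.e., the VC dimension of its induced class of distance comparers, is at most D^2. -/
lemma expand_sq (D K : ℕ) (A : Fin K → Fin D → ℝ) (y : Fin D → ℝ) :
    ∑ k, (∑ j, A k j * y j) ^ 2
      = ∑ p : Fin D × Fin D, (∑ k, A k p.1 * A k p.2) * (y p.1 * y p.2) := by
  calc ∑ k, (∑ j, A k j * y j) ^ 2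
      = ∑ k, ∑ i, ∑ j, A k i * A k j * (y i * y j) := by
        refine Finset.sum_congr rfl fun k _ => ?_
        rw [sq, Finset.sum_mul_sum]
        exact Finset.sum_congr rfl fun i _ => Finset.sum_congr rfl fun j _ => by ring
    _ = ∑ i, ∑ k, ∑ j, A k i * A k j * (y i * y j) := Finset.sum_comm
    _ = ∑ i, ∑ j, ∑ k, A k i * A k j * (y i * y j) :=
        Finset.sum_congr rfl fun i _ => Finset.sum_comm
    _ = ∑ p : Fin D × Fin D, (∑ k, A k p.1 * A k p.2) * (y p.1 * y p.2) := by
        rw [Fintype.sum_prod_type]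
        exact Finset.sum_congr rfl fun i _ => Finset.sum_congr rfl fun j _ =>
          (Finset.sum_mul _ _ _).symm



/-- `H` shatters the finite set `s` (propositional form). -/
def ShattersP {α : Type*} (H : Set (α → Prop)) (s : Finset α) : Prop :=
  ∀ t ⊆ s, ∃ h ∈ H, ∀ x ∈ s, (h x ↔ x ∈ t)

/-- The distance dimension of `Proj_{D,K}` (linear maps `ℝ^D → ℝ^K` with matrix entries in
`[-1,1]`, Euclidean metric on `ℝ^K`) — i.e. the VC dimension of the induced class of distance
comparers — is at most `D²`.  The comparer `Δ_A(x1,x2,x3,x4) = 1[‖A(x1-x2)‖ ≥ ‖A(x3-x4)‖]`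
is expressed via squared Euclidean norms. -/
theorem stmt_4 (D K : ℕ) :
    ∀ s : Finset ((Fin D → ℝ) × (Fin D → ℝ) × (Fin D → ℝ) × (Fin D → ℝ)),
      ShattersP {g | ∃ A : Fin K → Fin D → ℝ, (∀ k j, A k j ∈ Set.Icc (-1 : ℝ) 1) ∧
        g = fun q =>
          ∑ k, (∑ j, A k j * (q.2.2.1 j - q.2.2.2 j)) ^ 2 ≤
          ∑ k, (∑ j, A k j * (q.1 j - q.2.1 j)) ^ 2} s →
      s.card ≤ D ^ 2 := by
  intro s hs
  by_contra hcard
  push_neg at hcard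
  set v : ((Fin D → ℝ) × (Fin D → ℝ) × (Fin D → ℝ) × (Fin D → ℝ)) → (Fin D × Fin D → ℝ) :=
    fun q p =>
      (q.1 p.1 - q.2.1 p.1) * (q.1 p.2 - q.2.1 p.2)
        - (q.2.2.1 p.1 - q.2.2.2 p.1) * (q.2.2.1 p.2 - q.2.2.2 p.2) with hv
  have hiff : ∀ (A : Fin K → Fin D → ℝ) q,
      ((∑ k, (∑ j, A k j * (q.2.2.1 j - q.2.2.2 j)) ^ 2 ≤
        ∑ k, (∑ j, A k j * (q.1 j - q.2.1 j)) ^ 2)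
        ↔ 0 ≤ ∑ p : Fin D × Fin D, (∑ k, A k p.1 * A k p.2) * v q p) := by
    intro A q
    rw [← sub_nonneg, expand_sq, expand_sq, ← Finset.sum_sub_distrib]
    constructor <;> intro h <;>
    · refine le_of_le_of_eq h (Finset.sum_congr rfl fun p _ => ?_)
      simp only [hv]
      ring
  have hdep : ¬ LinearIndependent ℝ (fun q : s => v q) := by
    intro hli
    have h1 := hli.fintype_card_le_finrank
    rw [Module.finrank_fintype_fun_eq_card, Fintype.card_coe, Fintype.card_prod,
      Fintype.card_fin, pow_two] at *
    omega
  rw [Fintype.not_linearIndependent_iff] at hdep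
  obtain ⟨g, hg0, i0, hi0⟩ := hdep
  -- extend coefficients to the ambient type
  classical
  -- choose coefficients with a strictly positive one
  obtain ⟨c, hc0, q0, hq0s, hq0pos⟩ :
      ∃ c : ((Fin D → ℝ) × (Fin D → ℝ) × (Fin D → ℝ) × (Fin D → ℝ)) → ℝ,
        (∑ q ∈ s, c q • v q) = 0 ∧ ∃ q ∈ s, 0 < c q := by
    by_cases hpos : ∃ i : s, 0 < g i
    · obtain ⟨i1, hi1⟩ := hpos
      refine ⟨fun q => if h : q ∈ s then g ⟨q, h⟩ else 0, ?_, i1, i1.2, by simp [i1.2, hi1]⟩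
      rw [← Finset.sum_attach s]
      simpa using hg0
    · push_neg at hpos
      refine ⟨fun q => if h : q ∈ s then -g ⟨q, h⟩ else 0, ?_, i0, i0.2, ?_⟩
      · rw [← Finset.sum_attach s]
        simp only [Finset.coe_mem, dif_pos, neg_smul, ← Finset.sum_neg_distrib]
        simpa using congrArg Neg.neg hg0
      · simp only [i0.2, dif_pos]
        have := hpos i0
        have : g i0 < 0 := lt_of_le_of_ne this hi0
        simpa using this
  -- the classifier for the subset of nonpositive coefficients
  obtain ⟨h, hH, hh⟩ := hs (s.filter fun q => ¬ 0 < c q) (Finset.filter_subset _ _)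
  obtain ⟨A, hA, rfl⟩ := hH
  set M : Fin D × Fin D → ℝ := fun p => ∑ k, A k p.1 * A k p.2 with hM
  set L : ((Fin D → ℝ) × (Fin D → ℝ) × (Fin D → ℝ) × (Fin D → ℝ)) → ℝ :=
    fun q => ∑ p : Fin D × Fin D, M p * v q p with hL
  have hsum : ∑ q ∈ s, c q * L q = 0 := by
    calc ∑ q ∈ s, c q * L q
        = ∑ q ∈ s, ∑ p : Fin D × Fin D, M p * (c q * v q p) := by
          refine Finset.sum_congr rfl fun q _ => ?_
          rw [hL, Finset.mul_sum]
          exact Finset.sum_congr rfl fun p _ => by ring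
      _ = ∑ p : Fin D × Fin D, M p * ∑ q ∈ s, c q * v q p := by
          rw [Finset.sum_comm]
          exact Finset.sum_congr rfl fun p _ => (Finset.mul_sum _ _ _).symm
      _ = 0 := by
          refine Finset.sum_eq_zero fun p _ => ?_
          have h0 : ∑ x ∈ s, c x * v x p = 0 := by
            have := congrFun hc0 p
            simpa [Finset.sum_apply] using this
          rw [h0, mul_zero]
  have hkey : ∀ q ∈ s, (0 ≤ L q ↔ ¬ 0 < c q) := by
    intro q hq
    have hthis := hh q hq
    simp only [Finset.mem_filter] at hthis
    rw [hiff A q] at hthis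
    exact hthis.trans ⟨fun h2 => h2.2, fun h2 => ⟨hq, h2⟩⟩
  have hterm : ∀ q ∈ s, c q * L q ≤ 0 := by
    intro q hq
    by_cases hcq : 0 < c q
    · have hLq : L q < 0 := by
        by_contra hL
        exact ((hkey q hq).mp (not_lt.mp hL)) hcq
      exact le_of_lt (mul_neg_of_pos_of_neg hcq hLq)
    · have hLq : 0 ≤ L q := (hkey q hq).mpr hcq
      nlinarith [not_lt.mp hcq]
  have hstrict : c q0 * L q0 < 0 := by
    have hLq : L q0 < 0 := by
      by_contra hL
      exact ((hkey q0 hq0s).mp (not_lt.mp hL)) hq0pos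
    exact mul_neg_of_pos_of_neg hq0pos hLq
  have : ∑ q ∈ s, c q * L q < ∑ q ∈ s, (0 : ℝ) :=
    Finset.sum_lt_sum hterm ⟨q0, hq0s, by simpa using hstrict⟩
  rw [hsum, Finset.sum_const, smul_zero] at this
  exact lt_irrefl _ this
end

section
/- Fix a labeled dataset S of n points in X × Y, and for each φ ∈ Φ let h_{S,φ}(x,y) = 1 iff the k-nearest-neighbor classifier trained on φ(S) predicts y at φ(x). If the distance dimension ∂(Φ) is finite, then the VC dimension of H(S,Φ) = {h_{S,φ} : φ ∈ Φ} is at most c·∂(Φ)·log(n + ∂(Φ)) for an absolute constant c. -/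
open Finset Real

section Shattering

variable {α β γ ι : Type*}

theorem setOf_exists_mem_eq_image (f : ι → α) (P : Set ι) :
    {g | ∃ i ∈ P, g = f i} = f '' P := by
  ext
  simp [eq_comm]

theorem ShattersP.injOn_of_comp {H : Set (γ → Prop)} {q : β → γ} {u : Finset β}
    (hu : ShattersP ((· ∘ q) '' H) u) : Set.InjOn q u := by
  intro a ha b hb hab
  obtain ⟨_, ⟨g, -, rfl⟩, hg⟩ := hu {a} (singleton_subset_iff.2 ha)
  have hga : g (q a) := (hg a ha).2 (mem_singleton_self a)
  exact (mem_singleton.1 ((hg b hb).1 (show g (q b) from hab ▸ hga))).symm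

theorem ShattersP.image_of_comp [DecidableEq γ] {H : Set (γ → Prop)} {q : β → γ}
    {u : Finset β} (hu : ShattersP ((· ∘ q) '' H) u) : ShattersP H (u.image q) := by
  intro t _
  obtain ⟨_, ⟨g, hg, rfl⟩, hgt⟩ := hu (u.filter (q · ∈ t)) (filter_subset _ _)
  refine ⟨g, hg, ?_⟩
  simp only [mem_image, forall_exists_index, and_imp]
  rintro _ a ha rfl
  simpa [ha] using hgt a ha

noncomputable def finsetFamily [Fintype β] (H : Set (β → Prop)) : Finset (Finset β) := by
  classical exact univ.filter fun t => ∃ h ∈ H, ∀ b, b ∈ t ↔ h b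

theorem mem_finsetFamily [Fintype β] {H : Set (β → Prop)} {t : Finset β} :
    t ∈ finsetFamily H ↔ ∃ h ∈ H, ∀ b, b ∈ t ↔ h b := by
  simp [finsetFamily]

theorem ShattersP.of_shatters_finsetFamily [Fintype β] [DecidableEq β] {H : Set (β → Prop)}
    {u : Finset β}
    (hu : (finsetFamily H).Shatters u) : ShattersP H u := by
  intro t ht
  obtain ⟨w, hw, rfl⟩ := hu ht
  obtain ⟨h, hH, hwh⟩ := mem_finsetFamily.1 hw
  exact ⟨h, hH, fun x hx => by simp [hx, hwh]⟩

theorem card_finsetFamily_le [Fintype β] [DecidableEq β] [Nonempty β] {H : Set (β → Prop)}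
    {d : ℕ}
    (hH : ∀ u : Finset β, ShattersP H u → u.card ≤ d) :
    (finsetFamily H).card ≤ (d + 1) * Fintype.card β ^ d := by
  have hvc : (finsetFamily H).vcDim ≤ d :=
    Finset.sup_le fun u hu => hH u (.of_shatters_finsetFamily (mem_shatterer.1 hu))
  calc (finsetFamily H).card ≤ (finsetFamily H).shatterer.card := card_le_card_shatterer _
    _ ≤ ∑ k ∈ Iic (finsetFamily H).vcDim, (Fintype.card β).choose k :=
        card_shatterer_le_sum_vcDim
    _ ≤ ∑ k ∈ Iic d, (Fintype.card β).choose k := sum_le_sum_of_subset (Iic_subset_Iic.2 hvc)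
    _ ≤ ∑ _k ∈ Iic d, Fintype.card β ^ d := sum_le_sum fun k hk =>
        (Nat.choose_le_pow _ _).trans (Nat.pow_le_pow_right Fintype.card_pos (mem_Iic.1 hk))
    _ = (d + 1) * Fintype.card β ^ d := by simp

theorem two_pow_card_le_card_finsetFamily [Fintype β] {P : Set ι} {h : ι → α → Prop}
    {k : ι → β → Prop} {s : Finset α}
    (hk : ∀ i ∈ P, ∀ j ∈ P, (∀ b, k i b ↔ k j b) → ∀ x ∈ s, (h i x ↔ h j x))
    (hs : ShattersP (h '' P) s) : 2 ^ s.card ≤ (finsetFamily (k '' P)).card := by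
  classical
  have hpick : ∀ t ∈ s.powerset, ∃ i ∈ P, ∀ x ∈ s, (h i x ↔ x ∈ t) := by
    intro t ht
    obtain ⟨_, ⟨i, hi, rfl⟩, hit⟩ := hs t (mem_powerset.1 ht)
    exact ⟨i, hi, hit⟩
  have : Nonempty ι := let ⟨i, _⟩ := hpick ∅ (empty_mem_powerset s); ⟨i⟩
  choose! F hFP hF using hpick
  rw [← card_powerset]
  refine card_le_card_of_injOn (fun t => univ.filter (k (F t))) (fun t ht => ?_)
    (fun t ht t' ht' heq => ?_)
  · exact mem_finsetFamily.2 ⟨k (F t), ⟨F t, hFP t ht, rfl⟩, by simp⟩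
  · have hcode : ∀ b, k (F t) b ↔ k (F t') b := by simpa [Finset.ext_iff] using heq
    ext x
    by_cases hx : x ∈ s
    · rw [← hF t ht x hx, ← hF t' ht' x hx]
      exact hk _ (hFP t ht) _ (hFP t' ht') hcode x hx
    · simp only [mem_coe, mem_powerset] at ht ht'
      exact iff_of_false (fun h => hx (ht h)) (fun h => hx (ht' h))

end Shattering

/-- The paper's `Δ_φ (x₁, x₂, x₃, x₄) = 1[d(φ x₁, φ x₂) ≥ d(φ x₃, φ x₄)]`. -/
def distComparer {X Z : Type*} [Dist Z] (φ : X → Z) (q : X × X × X × X) : Prop :=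
  dist (φ q.2.2.1) (φ q.2.2.2) ≤ dist (φ q.1) (φ q.2.1)

theorem two_pow_card_le_of_shattersP_predict {X Z Y : Type*} [Dist Z] {Φ : Set (X → Z)}
    {d n : ℕ} {S : Fin n → X × Y} {predict : (X → Z) → X → Y}
    (hΦ : ∀ u, ShattersP (distComparer '' Φ) u → u.card ≤ d)
    (hpredict : ∀ φ ∈ Φ, ∀ φ' ∈ Φ, ∀ x : X,
      (∀ i j : Fin n,
        dist (φ x) (φ (S i).1) ≤ dist (φ x) (φ (S j).1) ↔
        dist (φ' x) (φ' (S i).1) ≤ dist (φ' x) (φ' (S j).1)) →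
      predict φ x = predict φ' x)
    {s : Finset (X × Y)} (hs : s.Nonempty) (hn : 0 < n)
    (hshat : ShattersP ((fun φ (p : X × Y) => predict φ p.1 = p.2) '' Φ) s) :
    2 ^ s.card ≤ (d + 1) * (s.card * n ^ 2) ^ d := by
  classical
  let q : s × Fin n × Fin n → X × X × X × X := fun a =>
    (a.1.1.1, (S a.2.2).1, a.1.1.1, (S a.2.1).1)
  have : Nonempty (s × Fin n × Fin n) := ⟨(hs.coe_sort.some, ⟨0, hn⟩, ⟨0, hn⟩)⟩
  calc 2 ^ s.card ≤ (finsetFamily ((fun φ => distComparer φ ∘ q) '' Φ)).card := by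
        refine two_pow_card_le_card_finsetFamily (fun φ hφ φ' hφ' hcode x hx => ?_) hshat
        rw [hpredict φ hφ φ' hφ' x.1 fun i j => hcode (⟨x, hx⟩, i, j)]
    _ ≤ (d + 1) * Fintype.card (s × Fin n × Fin n) ^ d := by
        refine card_finsetFamily_le fun u hu => ?_
        have hu' : ShattersP ((· ∘ q) '' (distComparer '' Φ)) u := by rwa [Set.image_image]
        rw [← card_image_of_injOn hu'.injOn_of_comp]
        exact hΦ _ hu'.image_of_comp
    _ = (d + 1) * (s.card * n ^ 2) ^ d := by simp [Fintype.card_prod, sq]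

theorem log_le_mul_add_log_inv {a x : ℝ} (ha : 0 < a) (hx : 0 < x) :
    log x ≤ a * x + log a⁻¹ := by
  have := log_le_sub_one_of_pos (mul_pos ha hx)
  rw [log_mul ha.ne' hx.ne'] at this
  rw [log_inv]
  linarith

theorem le_mul_log_of_two_pow_le {v d n : ℕ} (hv : 0 < v) (hd : 1 ≤ d) (hn : 1 ≤ n)
    (h : (2 : ℝ) ^ v ≤ (d + 1) * (v * n ^ 2) ^ d) :
    (v : ℝ) ≤ 12 / log 2 * d * log (n + d) := by
  have hv : (0 : ℝ) < v := by exact_mod_cast hv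
  have hd : (1 : ℝ) ≤ d := by exact_mod_cast hd
  have hn : (1 : ℝ) ≤ n := by exact_mod_cast hn
  set L := log (n + d)
  have hlog2 : 1 / 2 < log 2 := by have := log_two_gt_d9; linarith
  have hlogs : v * log 2 ≤ log (d + 1) + d * (log v + 2 * log n) := by
    have := log_le_log (by positivity) h
    rwa [log_pow, log_mul (by positivity) (by positivity), log_pow,
      log_mul (by positivity) (by positivity), log_pow] at this
  have hd1 : log (d + 1) ≤ L := log_le_log (by positivity) (by linarith)
  have hnL : log n ≤ L := log_le_log (by positivity) (by linarith)
  have hvL : log v ≤ log 2 / (2 * d) * v + 3 * L := by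
    calc log v ≤ log 2 / (2 * d) * v + log (log 2 / (2 * d))⁻¹ :=
          log_le_mul_add_log_inv (by positivity) hv
      _ ≤ log 2 / (2 * d) * v + log ((n + d) ^ 3) := by
          have h4d : 4 * (d : ℝ) ≤ (n + d) ^ 3 :=
            calc 4 * (d : ℝ) ≤ (1 + d) ^ 3 := by
                  nlinarith [mul_le_mul hd hd zero_le_one (by linarith)]
              _ ≤ (n + d) ^ 3 := by gcongr
          gcongr
          rw [inv_div, div_le_iff₀ (by linarith)]
          nlinarith
      _ = log 2 / (2 * d) * v + 3 * L := by rw [log_pow]; push_cast; ring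
  have hhalf : d * (log 2 / (2 * d) * v) = log 2 / 2 * v := by field_simp
  have hdv := mul_le_mul_of_nonneg_left hvL (by positivity : (0 : ℝ) ≤ d)
  have hdn := mul_le_mul_of_nonneg_left hnL (by positivity : (0 : ℝ) ≤ d)
  have hLd : L ≤ d * L := le_mul_of_one_le_left (by linarith [log_nonneg hn]) hd
  rw [div_mul_eq_mul_div, div_mul_eq_mul_div, le_div_iff₀ (by linarith)]
  linarith

/-- There is an absolute constant `c` such that: for any family `Φ` of feature maps `X → Z`
whose distance comparer class has VC dimension (distance dimension) at most `d`, any labeled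
dataset `S` of `n` points, and any nearest-neighbour style predictor whose prediction at `x`
under `φ` is determined by the pairwise distance comparisons of `φ x` to the points of `S`,
the VC dimension of the loss class `H(S,Φ) = {(x,y) ↦ 1[N_S^φ(x) = y] : φ ∈ Φ}` is at most
`c · d · log (n + d)`. -/
theorem stmt_6 : ∃ c : ℝ, 0 < c ∧
    ∀ (X Z Y : Type) [MetricSpace Z] (Φ : Set (X → Z)) (d n : ℕ)
      (S : Fin n → X × Y) (predict : (X → Z) → X → Y),
      1 ≤ d → 1 ≤ n →
      (∀ s : Finset (X × X × X × X),
        ShattersP {g | ∃ φ ∈ Φ,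
          g = fun q : X × X × X × X =>
            dist (φ q.2.2.1) (φ q.2.2.2) ≤ dist (φ q.1) (φ q.2.1)} s →
        s.card ≤ d) →
      (∀ φ ∈ Φ, ∀ φ' ∈ Φ, ∀ x : X,
        (∀ i j : Fin n,
          dist (φ x) (φ (S i).1) ≤ dist (φ x) (φ (S j).1) ↔
          dist (φ' x) (φ' (S i).1) ≤ dist (φ' x) (φ' (S j).1)) →
        predict φ x = predict φ' x) →
      ∀ s : Finset (X × Y),
        ShattersP {g | ∃ φ ∈ Φ, g = fun p : X × Y => predict φ p.1 = p.2} s →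
        (s.card : ℝ) ≤ c * d * Real.log (n + d) := by
  refine ⟨12 / log 2, by positivity, ?_⟩
  intro X Z Y _ Φ d n S predict hd hn hcomp hpredict s hshat
  rcases s.eq_empty_or_nonempty with rfl | hs
  · have : (0 : ℝ) ≤ log (n + d) := log_nonneg (by norm_cast; omega)
    simpa using by positivity
  · have hcount := two_pow_card_le_of_shattersP_predict (S := S)
      (fun u hu => hcomp u (by rwa [← setOf_exists_mem_eq_image] at hu)) hpredict hs hn
      (by rw [← setOf_exists_mem_eq_image]; exact hshat)
    exact le_mul_log_of_two_pow_le hs.card_pos hd hn (by exact_mod_cast hcount)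
end

section
/- For an integer n > 1 and a family Φ with finite distance dimension ∂(Φ), consider the class Q_n(Φ) of functions q_{φ,r,n}: X^{n+1} → {0,1} with q_{φ,r,n}(x, x_1,…,x_n) = 1 iff there exists i with d_Z(φ(x),φ(x_i)) < r, ranging over φ ∈ Φ and r ≥ 0. Then the VC dimension of Q_n(Φ) is at most c·∂(Φ)·log(∂(Φ) + n) for an absolute constant c. -/
open Finset

/-- A chain of subsets of `P` has at most `P.card + 1` elements. -/
lemma chain_card_le {α : Type*} [DecidableEq α] {P : Finset α} {C : Finset (Finset α)}
    (hP : ∀ a ∈ C, a ⊆ P) (hchain : ∀ a ∈ C, ∀ b ∈ C, a ⊆ b ∨ b ⊆ a) :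
    C.card ≤ P.card + 1 := by
  have hinj : Set.InjOn Finset.card (C : Set (Finset α)) := by
    intro a ha b hb hab
    rcases hchain a ha b hb with h | h
    · exact Finset.eq_of_subset_of_card_le h hab.ge
    · exact (Finset.eq_of_subset_of_card_le h hab.le).symm
  calc C.card = (C.image Finset.card).card := (Finset.card_image_of_injOn hinj).symm
    _ ≤ (Finset.range (P.card + 1)).card := by
        refine Finset.card_le_card ?_
        intro x hx
        obtain ⟨a, ha, rfl⟩ := Finset.mem_image.1 hx
        exact Finset.mem_range.2 (Nat.lt_succ_of_le (Finset.card_le_card (hP a ha)))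
    _ = P.card + 1 := Finset.card_range _

lemma sum_choose_le_pow (M d : ℕ) : ∑ i ∈ Finset.range (d + 1), M.choose i ≤ (M + 1) ^ d := by
  induction d with
  | zero => simp
  | succ d ih =>
    rw [Finset.sum_range_succ]
    have h1 : M.choose (d + 1) ≤ M ^ (d + 1) := Nat.choose_le_pow M (d + 1)
    have h2 : M ^ (d + 1) ≤ (M + 1) ^ d * M := by
      rw [pow_succ]
      exact Nat.mul_le_mul_right M (Nat.pow_le_pow_left (Nat.le_succ M) d)
    calc ∑ i ∈ Finset.range (d + 1), M.choose i + M.choose (d + 1)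
        ≤ (M + 1) ^ d + (M + 1) ^ d * M := Nat.add_le_add ih (h1.trans h2)
      _ = (M + 1) ^ (d + 1) := by ring

lemma sauer_count {α : Type*} [DecidableEq α] {A : Finset (Finset α)} {Qs : Finset α} {d : ℕ}
    (hA : ∀ a ∈ A, a ⊆ Qs) (hd : ∀ b, A.Shatters b → b.card ≤ d) :
    A.card ≤ (Qs.card + 1) ^ d := by
  have h1 := Finset.card_le_card_shatterer A
  have h2 : A.shatterer ⊆ Qs.powerset.filter (fun b => b.card ≤ d) := by
    intro b hb
    rw [Finset.mem_shatterer] at hb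
    obtain ⟨a, haA, hba⟩ := hb.exists_superset
    exact Finset.mem_filter.2 ⟨Finset.mem_powerset.2 (hba.trans (hA a haA)), hd b hb⟩
  have h3 : Qs.powerset.filter (fun b => b.card ≤ d) ⊆
      (Finset.range (d + 1)).biUnion (fun i => Qs.powersetCard i) := by
    intro b hb
    rw [Finset.mem_filter, Finset.mem_powerset] at hb
    exact Finset.mem_biUnion.2 ⟨b.card, Finset.mem_range.2 (Nat.lt_succ_of_le hb.2),
      Finset.mem_powersetCard.2 ⟨hb.1, rfl⟩⟩
  calc A.card ≤ A.shatterer.card := h1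
    _ ≤ (Qs.powerset.filter (fun b => b.card ≤ d)).card := Finset.card_le_card h2
    _ ≤ ((Finset.range (d + 1)).biUnion (fun i => Qs.powersetCard i)).card :=
        Finset.card_le_card h3
    _ ≤ ∑ i ∈ Finset.range (d + 1), (Qs.powersetCard i).card := Finset.card_biUnion_le
    _ = ∑ i ∈ Finset.range (d + 1), Qs.card.choose i := by
        simp [Finset.card_powersetCard]
    _ ≤ (Qs.card + 1) ^ d := sum_choose_le_pow _ _

lemma key_count {X Z : Type} [MetricSpace Z] (Φ : Set (X → Z)) (d n : ℕ)
    (hcomp : ∀ s : Finset (X × X × X × X),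
      ShattersP {g | ∃ φ ∈ Φ,
        g = fun q : X × X × X × X =>
          dist (φ q.2.2.1) (φ q.2.2.2) ≤ dist (φ q.1) (φ q.2.1)} s →
      s.card ≤ d)
    (s : Finset (X × (Fin n → X)))
    (hs : ShattersP {g | ∃ φ ∈ Φ, ∃ r : ℝ, 0 ≤ r ∧
      g = fun p : X × (Fin n → X) => ∃ i, dist (φ p.1) (φ (p.2 i)) < r} s) :
    2 ^ s.card ≤ ((s.card * n) ^ 2 + 1) ^ d * (s.card * n + 1) := by
  classical
  -- witnesses
  obtain ⟨g₀, hg₀, -⟩ := hs ∅ (Finset.empty_subset s)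
  obtain ⟨φ₀, hφ₀, r₀, hr₀, -⟩ := hg₀
  have hwit : ∀ t : Finset (X × (Fin n → X)), ∃ φ, φ ∈ Φ ∧ ∃ r : ℝ, 0 ≤ r ∧
      (t ⊆ s → ∀ p ∈ s, ((∃ i, dist (φ p.1) (φ (p.2 i)) < r) ↔ p ∈ t)) := by
    intro t
    by_cases ht : t ⊆ s
    · obtain ⟨g, hg, hgt⟩ := hs t ht
      obtain ⟨φ, hφ, r, hr, rfl⟩ := hg
      exact ⟨φ, hφ, r, hr, fun _ p hp => hgt p hp⟩
    · exact ⟨φ₀, hφ₀, r₀, hr₀, fun h => absurd h ht⟩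
  choose φw hφw rr hrr hlab using hwit
  set P : Finset (X × X) :=
    (s ×ˢ (Finset.univ : Finset (Fin n))).image (fun pi => (pi.1.1, pi.1.2 pi.2)) with hP
  set Qs : Finset (X × X × X × X) :=
    (P ×ˢ P).image (fun ab => (ab.1.1, ab.1.2, ab.2.1, ab.2.2)) with hQs
  have hmemP : ∀ p ∈ s, ∀ i : Fin n, (p.1, p.2 i) ∈ P := by
    intro p hp i
    exact Finset.mem_image.2 ⟨(p, i), Finset.mem_product.2 ⟨hp, Finset.mem_univ i⟩, rfl⟩
  have hmemQ : ∀ q ∈ P, ∀ q' ∈ P, (q.1, q.2, q'.1, q'.2) ∈ Qs := by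
    intro q hq q' hq'
    exact Finset.mem_image.2 ⟨(q, q'), Finset.mem_product.2 ⟨hq, hq'⟩, rfl⟩
  set L : Finset (X × (Fin n → X)) → Finset (X × X × X × X) := fun t =>
    Qs.filter (fun q => dist (φw t q.2.2.1) (φw t q.2.2.2) ≤ dist (φw t q.1) (φw t q.2.1))
    with hL
  set S : Finset (X × (Fin n → X)) → Finset (X × X) := fun t =>
    P.filter (fun q => dist (φw t q.1) (φw t q.2) < rr t) with hS
  set f : Finset (X × (Fin n → X)) → Finset (X × X × X × X) × Finset (X × X) := fun t =>
    (L t, S t) with hf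
  -- membership in t is determined by S t
  have hdet : ∀ t ∈ s.powerset, ∀ p ∈ s, (p ∈ t ↔ ∃ i : Fin n, (p.1, p.2 i) ∈ S t) := by
    intro t ht p hp
    rw [← hlab t (Finset.mem_powerset.1 ht) p hp]
    constructor
    · rintro ⟨i, hi⟩
      exact ⟨i, Finset.mem_filter.2 ⟨hmemP p hp i, hi⟩⟩
    · rintro ⟨i, hi⟩
      exact ⟨i, (Finset.mem_filter.1 hi).2⟩
  have hfi : Set.InjOn f (s.powerset : Set (Finset (X × (Fin n → X)))) := by
    intro t ht u hu hfu
    simp only [Finset.mem_coe] at ht hu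
    have hSeq : S t = S u := congrArg Prod.snd hfu
    ext p
    by_cases hp : p ∈ s
    · rw [hdet t ht p hp, hdet u hu p hp, hSeq]
    · constructor
      · intro h; exact absurd ((Finset.mem_powerset.1 ht) h) hp
      · intro h; exact absurd ((Finset.mem_powerset.1 hu) h) hp
  set B := s.powerset.image f with hB
  have h2m : 2 ^ s.card = B.card := by
    rw [hB, Finset.card_image_of_injOn hfi, Finset.card_powerset]
  set A := B.image Prod.fst with hA
  -- trace back from B
  have htrace : ∀ x ∈ B, ∃ t ∈ s.powerset, f t = x := by
    intro x hx
    obtain ⟨t, ht, rfl⟩ := Finset.mem_image.1 hx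
    exact ⟨t, ht, rfl⟩
  -- fiberwise counting
  have hfib : ∀ a ∈ A, (B.filter (fun x => x.1 = a)).card ≤ P.card + 1 := by
    intro a _
    have hsnd : Set.InjOn Prod.snd ((B.filter (fun x => x.1 = a)) :
        Set (Finset (X × X × X × X) × Finset (X × X))) := by
      intro x hx y hy hxy
      simp only [Finset.coe_filter, Set.mem_setOf_eq] at hx hy
      exact Prod.ext (hx.2.trans hy.2.symm) hxy
    rw [← Finset.card_image_of_injOn hsnd]
    refine chain_card_le ?_ ?_
    · intro b hb
      obtain ⟨x, hx, rfl⟩ := Finset.mem_image.1 hb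
      obtain ⟨t, _, rfl⟩ := htrace x (Finset.mem_filter.1 hx).1
      exact Finset.filter_subset _ _
    · -- chain property
      intro b hb b' hb'
      obtain ⟨x, hx, rfl⟩ := Finset.mem_image.1 hb
      obtain ⟨x', hx', rfl⟩ := Finset.mem_image.1 hb'
      obtain ⟨hxB, hxa⟩ := Finset.mem_filter.1 hx
      obtain ⟨hx'B, hx'a⟩ := Finset.mem_filter.1 hx'
      obtain ⟨t, _, rfl⟩ := htrace x hxB
      obtain ⟨u, _, rfl⟩ := htrace x' hx'B
      have hLeq : L t = L u := by
        have : (f t).1 = (f u).1 := hxa.trans hx'a.symm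
        simpa using this
      -- show S t ⊆ S u ∨ S u ⊆ S t
      by_contra hcon
      push_neg at hcon
      obtain ⟨q₁, hq₁t, hq₁u⟩ := Finset.not_subset.1 hcon.1
      obtain ⟨q₂, hq₂u, hq₂t⟩ := Finset.not_subset.1 hcon.2
      obtain ⟨hq₁P, hq₁d⟩ := Finset.mem_filter.1 hq₁t
      obtain ⟨hq₂P, hq₂d⟩ := Finset.mem_filter.1 hq₂u
      have hq₂nt : ¬ dist (φw t q₂.1) (φw t q₂.2) < rr t := by
        intro h; exact hq₂t (Finset.mem_filter.2 ⟨hq₂P, h⟩)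
      -- tuple (q₂, q₁) is in L t
      have hT : (q₂.1, q₂.2, q₁.1, q₁.2) ∈ L t := by
        refine Finset.mem_filter.2 ⟨hmemQ q₂ hq₂P q₁ hq₁P, ?_⟩
        push_neg at hq₂nt
        exact le_of_lt (lt_of_lt_of_le hq₁d hq₂nt)
      rw [hLeq] at hT
      have hT' := (Finset.mem_filter.1 hT).2
      simp only at hT'
      exact hq₁u (Finset.mem_filter.2 ⟨hq₁P, lt_of_le_of_lt hT' hq₂d⟩)
  have hBcard : B.card ≤ A.card * (P.card + 1) := by
    rw [Finset.card_eq_sum_card_fiberwise (f := Prod.fst) (t := A)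
      (fun x hx => Finset.mem_image_of_mem _ hx)]
    calc ∑ a ∈ A, (B.filter (fun x => x.1 = a)).card
        ≤ ∑ _a ∈ A, (P.card + 1) := Finset.sum_le_sum hfib
      _ = A.card * (P.card + 1) := by rw [Finset.sum_const, smul_eq_mul]
  have hAcard : A.card ≤ (Qs.card + 1) ^ d := by
    refine sauer_count ?_ ?_
    · intro a ha
      obtain ⟨x, hx, rfl⟩ := Finset.mem_image.1 ha
      obtain ⟨t, _, rfl⟩ := htrace x hx
      exact Finset.filter_subset _ _
    · intro b hb
      refine hcomp b ?_
      intro u hu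
      obtain ⟨a, haA, hab⟩ := hb hu
      obtain ⟨x, hxB, rfl⟩ := Finset.mem_image.1 haA
      obtain ⟨t, _, rfl⟩ := htrace x hxB
      obtain ⟨a', ha'A, hba'⟩ := hb.exists_superset
      have hbQs : b ⊆ Qs := by
        obtain ⟨x', hx'B, rfl⟩ := Finset.mem_image.1 ha'A
        obtain ⟨t', _, rfl⟩ := htrace x' hx'B
        exact hba'.trans (Finset.filter_subset _ _)
      refine ⟨fun q : X × X × X × X =>
        dist (φw t q.2.2.1) (φw t q.2.2.2) ≤ dist (φw t q.1) (φw t q.2.1),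
        ⟨φw t, ?_, rfl⟩, ?_⟩
      · exact hφw t
      · intro q hq
        have hqQs : q ∈ Qs := hbQs hq
        constructor
        · intro hgq
          have : q ∈ (f t).1 := Finset.mem_filter.2 ⟨hqQs, hgq⟩
          rw [← hab]
          exact Finset.mem_inter.2 ⟨hq, this⟩
        · intro hqu
          rw [← hab] at hqu
          exact (Finset.mem_filter.1 (Finset.mem_inter.1 hqu).2).2
  calc 2 ^ s.card = B.card := h2m
    _ ≤ A.card * (P.card + 1) := hBcard
    _ ≤ (Qs.card + 1) ^ d * (P.card + 1) := Nat.mul_le_mul_right _ hAcard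
    _ ≤ ((s.card * n) ^ 2 + 1) ^ d * (s.card * n + 1) := by
        have hPc : P.card ≤ s.card * n := by
          calc P.card ≤ (s ×ˢ (Finset.univ : Finset (Fin n))).card := Finset.card_image_le
            _ = s.card * n := by rw [Finset.card_product, Finset.card_univ, Fintype.card_fin]
        have hQc : Qs.card ≤ (s.card * n) ^ 2 := by
          calc Qs.card ≤ (P ×ˢ P).card := Finset.card_image_le
            _ = P.card * P.card := Finset.card_product _ _
            _ ≤ (s.card * n) * (s.card * n) := Nat.mul_le_mul hPc hPc
            _ = (s.card * n) ^ 2 := (sq (s.card * n)).symm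
        exact Nat.mul_le_mul (Nat.pow_le_pow_left (Nat.succ_le_succ hQc) d)
          (Nat.succ_le_succ hPc)

set_option maxHeartbeats 1000000 in

lemma real_part (m d n : ℕ) (hd : 1 ≤ d) (hn : 1 < n) (hm : 1 ≤ m)
    (key : 2 ^ m ≤ ((m * n) ^ 2 + 1) ^ d * (m * n + 1)) :
    (m : ℝ) ≤ 200 * d * Real.log (d + n) := by
  set a : ℝ := (m : ℝ) with ha
  set b : ℝ := (n : ℝ) with hb
  set D : ℝ := (d : ℝ) with hD
  have ha1 : 1 ≤ a := by rw [ha]; exact_mod_cast hm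
  have hb2 : 2 ≤ b := by rw [hb]; exact_mod_cast hn
  have hD1 : 1 ≤ D := by rw [hD]; exact_mod_cast hd
  have hD0 : (0:ℝ) < D := by linarith
  have hab2 : 2 ≤ a * b := by nlinarith
  have keyR : (2:ℝ) ^ m ≤ ((a * b) ^ 2 + 1) ^ d * (a * b + 1) := by
    have h2 : ((2:ℝ)) ^ m = ((2 ^ m : ℕ) : ℝ) := by push_cast; ring
    rw [h2]
    calc ((2 ^ m : ℕ) : ℝ) ≤ ((((m * n) ^ 2 + 1) ^ d * (m * n + 1) : ℕ) : ℝ) := by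
          exact_mod_cast key
      _ = ((a * b) ^ 2 + 1) ^ d * (a * b + 1) := by push_cast; ring
  set La := Real.log a with hLa
  set Lb := Real.log b with hLb
  set L2 := Real.log 2 with hL2
  set LD := Real.log D with hLD
  set LK := Real.log (D + b) with hLK
  have hLa0 : 0 ≤ La := Real.log_nonneg ha1
  have hLb0 : 0 ≤ Lb := Real.log_nonneg (by linarith)
  have hLD0 : 0 ≤ LD := Real.log_nonneg hD1
  have hL90 : 0 ≤ Real.log 9 := Real.log_nonneg (by norm_num)
  have hL2a : 0.6931 ≤ L2 := by
    have := Real.log_two_gt_d9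
    rw [hL2]; linarith
  have hL2b : L2 ≤ 1 := by
    have := Real.log_le_sub_one_of_pos (show (0:ℝ) < 2 by norm_num)
    rw [hL2]; linarith
  have hL9 : Real.log 9 ≤ 8 := by
    have := Real.log_le_sub_one_of_pos (show (0:ℝ) < 9 by norm_num)
    linarith
  have hLK1 : 1 ≤ LK := by
    rw [hLK, Real.le_log_iff_exp_le (by linarith)]
    have := Real.exp_one_lt_d9
    linarith
  have hLbK : Lb ≤ LK := Real.log_le_log (by linarith) (by linarith)
  have hLDK : LD ≤ LK := Real.log_le_log (by linarith) (by linarith)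
  have hlog : a * L2 ≤ D * Real.log ((a * b) ^ 2 + 1) + Real.log (a * b + 1) := by
    have h := Real.log_le_log (by positivity) keyR
    rw [Real.log_pow, Real.log_mul (by positivity) (by positivity), Real.log_pow] at h
    exact_mod_cast h
  have f2 : Real.log ((a * b) ^ 2 + 1) ≤ 2 * (L2 + La + Lb) := by
    have h1 : (a * b) ^ 2 + 1 ≤ (2 * a * b) ^ 2 := by nlinarith
    calc Real.log ((a * b) ^ 2 + 1) ≤ Real.log ((2 * a * b) ^ 2) :=
          Real.log_le_log (by positivity) h1
      _ = 2 * Real.log (2 * a * b) := by rw [Real.log_pow]; push_cast; ring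
      _ = 2 * (L2 + La + Lb) := by
          rw [Real.log_mul (by positivity) (by positivity),
            Real.log_mul (by positivity) (by positivity)]
  have f3 : Real.log (a * b + 1) ≤ L2 + La + Lb := by
    have h1 : a * b + 1 ≤ 2 * a * b := by nlinarith
    calc Real.log (a * b + 1) ≤ Real.log (2 * a * b) := Real.log_le_log (by positivity) h1
      _ = L2 + La + Lb := by
          rw [Real.log_mul (by positivity) (by positivity),
            Real.log_mul (by positivity) (by positivity)]
  have f4 : La ≤ a / (9 * D) + (Real.log 9 + LD) := by
    have he : (9 * D) * (a / (9 * D)) = a := by field_simp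
    have h1 : Real.log (a / (9 * D)) ≤ a / (9 * D) - 1 :=
      Real.log_le_sub_one_of_pos (by positivity)
    calc La = Real.log ((9 * D) * (a / (9 * D))) := by rw [hLa, he]
      _ = Real.log (9 * D) + Real.log (a / (9 * D)) :=
          Real.log_mul (by positivity) (by positivity)
      _ = Real.log 9 + LD + Real.log (a / (9 * D)) := by
          rw [Real.log_mul (by norm_num) (by positivity)]
      _ ≤ a / (9 * D) + (Real.log 9 + LD) := by linarith
  have h4 : 3 * D * La ≤ a / 3 + 3 * D * (Real.log 9 + LD) := by
    have h := mul_le_mul_of_nonneg_left f4 (show (0:ℝ) ≤ 3 * D by positivity)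
    have he2 : 3 * D * (a / (9 * D)) = a / 3 := by field_simp; ring
    have h' : 3 * D * (a / (9 * D) + (Real.log 9 + LD))
        = a / 3 + 3 * D * (Real.log 9 + LD) := by rw [mul_add, he2]
    linarith [h, h'.le, h'.ge]
  have h6 : a * L2 ≤ 3 * D * (L2 + La + Lb) := by
    have hD2 : D * Real.log ((a * b) ^ 2 + 1) ≤ D * (2 * (L2 + La + Lb)) :=
      mul_le_mul_of_nonneg_left f2 (by linarith)
    have hprod : 0 ≤ (D - 1) * (L2 + La + Lb) :=
      mul_nonneg (by linarith) (by linarith)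
    linarith [hlog, hD2, f3, hprod]
  have h7 : a ≤ 9 * D * L2 + 9 * D * Lb + 9 * D * (Real.log 9 + LD) := by
    have hstep : a * L2 - a / 3 ≤ 3 * D * L2 + 3 * D * Lb + 3 * D * (Real.log 9 + LD) := by
      linarith [h6, h4]
    have hmul : 0.6931 * a ≤ L2 * a := mul_le_mul_of_nonneg_right hL2a (by linarith)
    linarith [hstep, hmul]
  have h9D : (0:ℝ) ≤ 9 * D := by linarith
  have t1 : 9 * D * L2 ≤ 9 * D * LK := by
    have h' : L2 ≤ LK := by linarith
    exact mul_le_mul_of_nonneg_left h' h9D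
  have t2 : 9 * D * Lb ≤ 9 * D * LK := mul_le_mul_of_nonneg_left hLbK h9D
  have t3 : 9 * D * (Real.log 9 + LD) ≤ 81 * D * LK := by
    have h9 : Real.log 9 + LD ≤ 9 * LK := by linarith
    have h'' := mul_le_mul_of_nonneg_left h9 h9D
    linarith [h'']
  have hDLK : 0 ≤ D * LK := mul_nonneg (by linarith) (by linarith)
  have hfinal : a ≤ 200 * D * LK := by linarith [h7, t1, t2, t3, hDLK]
  calc a ≤ 200 * D * LK := hfinal
    _ = 200 * D * Real.log (D + b) := by rw [hLK]

/-- There is an absolute constant `c` such that for any `n > 1` and any family `Φ` of maps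
`X → Z` with distance dimension at most `d`, the VC dimension of the class
`Q_n(Φ) = {(x, x_1, …, x_n) ↦ 1[∃ i, d(φ x, φ x_i) < r] : φ ∈ Φ, r ≥ 0}` is at most
`c · d · log (d + n)`. -/

theorem stmt_8 : ∃ c : ℝ, 0 < c ∧
    ∀ (X Z : Type) [MetricSpace Z] (Φ : Set (X → Z)) (d n : ℕ),
      1 ≤ d → 1 < n →
      (∀ s : Finset (X × X × X × X),
        ShattersP {g | ∃ φ ∈ Φ,
          g = fun q : X × X × X × X =>
            dist (φ q.2.2.1) (φ q.2.2.2) ≤ dist (φ q.1) (φ q.2.1)} s →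
        s.card ≤ d) →
      ∀ s : Finset (X × (Fin n → X)),
        ShattersP {g | ∃ φ ∈ Φ, ∃ r : ℝ, 0 ≤ r ∧
          g = fun p : X × (Fin n → X) => ∃ i, dist (φ p.1) (φ (p.2 i)) < r} s →
        (s.card : ℝ) ≤ c * d * Real.log (d + n) := by
  refine ⟨200, by norm_num, ?_⟩
  intro X Z _ Φ d n hd hn hcomp s hs
  rcases Nat.eq_zero_or_pos s.card with h0 | hm
  · rw [h0]
    have h1 : (1:ℝ) ≤ (d:ℝ) := by exact_mod_cast hd
    have h2 : (2:ℝ) ≤ (n:ℝ) := by exact_mod_cast hn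
    have hlog : 0 ≤ Real.log ((d:ℝ) + n) := Real.log_nonneg (by linarith)
    simp only [Nat.cast_zero]
    nlinarith
  · exact real_part s.card d n hd hn hm (key_count Φ d n hcomp s hs)
end

section
/- Let X be a finite set of v pairs of points shattered by the class Q(Φ) of threshold functions q_{φ,r}(x,x') = 1[d_φ(x,x') < r] with v even. Then Φ induces at least 2^{v/2} distinct total preorders on X when pairs are ranked by increasing d_φ-distance. -/
lemma two_pow_le_centralBinom : ∀ n : ℕ, 2 ^ n ≤ Nat.centralBinom n := by
  intro n
  induction n with
  | zero => simp [Nat.centralBinom]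
  | succ k ih =>
    have h := Nat.succ_mul_centralBinom_succ k
    have h1 : (k + 1) * 2 ^ (k + 1) ≤ (k + 1) * Nat.centralBinom (k + 1) := by
      rw [h]
      calc (k + 1) * 2 ^ (k + 1) = (2 * k + 2) * 2 ^ k := by ring
        _ ≤ 2 * (2 * k + 1) * 2 ^ k := Nat.mul_le_mul_right _ (by omega)
        _ ≤ 2 * (2 * k + 1) * Nat.centralBinom k := by
            exact Nat.mul_le_mul_left _ ih
    exact Nat.le_of_mul_le_mul_left h1 (Nat.succ_pos k)

/-- If the threshold class `Q(Φ) = {(x,x') ↦ 1[d_φ(x,x') < r]}` shatters a set of `v` pairs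
(`v` even), then ranking the pairs by increasing `d_φ`-distance induces at least `2^{v/2}`
distinct total preorders (comparison relations) on the pairs. -/
theorem stmt_19 {α Z : Type*} [MetricSpace Z] (Φ : Set (α → Z)) (v : ℕ) (hv : Even v)
    (p : Fin v → α × α)
    (hshatter : ∀ s : Finset (Fin v), ∃ φ ∈ Φ, ∃ r : ℝ,
      ∀ i : Fin v, (dist (φ (p i).1) (φ (p i).2) < r ↔ i ∈ s)) :
    2 ^ (v / 2) ≤ Set.ncard {R : Fin v → Fin v → Prop | ∃ φ ∈ Φ,
      R = fun i j => dist (φ (p j).1) (φ (p j).2) ≤ dist (φ (p i).1) (φ (p i).2)} := by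
  classical
  set S : Set (Fin v → Fin v → Prop) := {R : Fin v → Fin v → Prop | ∃ φ ∈ Φ,
      R = fun i j => dist (φ (p j).1) (φ (p j).2) ≤ dist (φ (p i).1) (φ (p i).2)} with hS
  -- choose witnesses
  choose φ hφΦ r hr using hshatter
  set g : Finset (Fin v) → (Fin v → Fin v → Prop) := fun s =>
    fun i j => dist (φ s (p j).1) (φ s (p j).2) ≤ dist (φ s (p i).1) (φ s (p i).2) with hg
  set P : Set (Finset (Fin v)) := {s | s.card = v / 2} with hP
  have hsub : g '' P ⊆ S := by
    rintro R ⟨s, -, rfl⟩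
    exact ⟨φ s, hφΦ s, rfl⟩
  have hinj : Set.InjOn g P := by
    intro s hs t ht hst
    by_contra hne
    have h1 : (s \ t).Nonempty := by
      rw [Finset.sdiff_nonempty]
      intro hsub'
      exact hne (Finset.eq_of_subset_of_card_le hsub' (by simp only [hP, Set.mem_setOf_eq] at hs ht; omega))
    have h2 : (t \ s).Nonempty := by
      rw [Finset.sdiff_nonempty]
      intro hsub'
      exact hne (Finset.eq_of_subset_of_card_le hsub' (by simp only [hP, Set.mem_setOf_eq] at hs ht; omega)).symm
    obtain ⟨i, hi⟩ := h1
    obtain ⟨j, hj⟩ := h2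
    rw [Finset.mem_sdiff] at hi hj
    -- under φ s : d i < r s ≤ d j, so ¬ g s i j
    have hdi : dist (φ s (p i).1) (φ s (p i).2) < r s := (hr s i).mpr hi.1
    have hdj : ¬ dist (φ s (p j).1) (φ s (p j).2) < r s := fun h => hj.2 ((hr s j).mp h)
    have hns : ¬ g s i j := by
      simp only [hg]
      push_neg at hdj ⊢
      exact lt_of_lt_of_le hdi hdj
    -- under φ t : d j < r t ≤ d i, so g t i j
    have hdj' : dist (φ t (p j).1) (φ t (p j).2) < r t := (hr t j).mpr hj.1
    have hdi' : ¬ dist (φ t (p i).1) (φ t (p i).2) < r t := fun h => hi.2 ((hr t i).mp h)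
    have hts : g t i j := by
      simp only [hg]
      push_neg at hdi'
      exact le_of_lt (lt_of_lt_of_le hdj' hdi')
    rw [hst] at hns
    exact hns hts
  have hPfin : P.Finite := Set.toFinite P
  have hSfin : S.Finite := Set.toFinite S
  have hcard : (g '' P).ncard = P.ncard := Set.ncard_image_of_injOn hinj
  have hle : (g '' P).ncard ≤ S.ncard := Set.ncard_le_ncard hsub hSfin
  have hPcard : P.ncard = Nat.choose v (v / 2) := by
    have : P = ↑(Finset.univ.powersetCard (v / 2) : Finset (Finset (Fin v))) := by
      ext s
      simp [hP, Finset.mem_powersetCard]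
    rw [this, Set.ncard_coe_finset, Finset.card_powersetCard, Finset.card_univ, Fintype.card_fin]
  obtain ⟨k, hk⟩ := hv
  have hv2 : v / 2 = k := by omega
  have hmid : 2 ^ (v / 2) ≤ Nat.choose v (v / 2) := by
    rw [hv2, hk]
    have : 2 * k = k + k := by ring
    calc 2 ^ k ≤ Nat.centralBinom k := two_pow_le_centralBinom k
      _ = Nat.choose (k + k) k := by rw [Nat.centralBinom, two_mul]
  omega
end
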